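/- arXiv:2103.02165 — 4 statements merged into one kernel-verified Lean document; each statement's English description precedes it below -/
import Mathlib

section
/- Let Y, Θ, Ψ be finite types. Let ŷ ∈ Y be the observed label; let PY : Θ → Y → ℝ with each PY θ a strictly positive probability mass function on Y (the likelihood); let p : Ψ → Θ → ℝ with each p ψ a strictly positive probability mass function on Θ (the prior in class ψ); let L : Ψ → ℝ be such that h ψ := 2^(−L ψ) is a probability mass function on Ψ (the parsimonious hyperprior); and fix a baseline θ0 ∈ Θ. For any probability mass functions Qθ ψ on Θ (one for each ψ ∈ Ψ) and Qψ on Ψ, the total information gained, KL(δ_ŷ ⊗ Qθ ⊗ Qψ ‖ PY · p · h) := ∑_{ψ, θ} Qψ ψ * Qθ ψ θ * Real.logb 2 ((Qθ ψ θ * Qψ ψ) / (PY θ ŷ * p ψ θ * h ψ)) (terms with Qψ ψ * Qθ ψ θ = 0 contributing 0), satisfies the identity KL(δ_ŷ ⊗ Qθ ⊗ Qψ ‖ PY · p · h) = Real.logb 2 (1 / PY θ0 ŷ) − ω[Qθ, Qψ], where the parsimony objective is ω[Qθ, Qψ] = ∑_{ψ, θ} Qψ ψ * Qθ ψ θ *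 Real.logb 2 (PY θ ŷ / PY θ0 ŷ) − ∑_ψ Qψ ψ * KL(Qθ ψ ‖ p ψ) − ∑_ψ Qψ ψ * L ψ + H(Qψ). Consequently, minimizing the total information over (Qθ, Qψ) is equivalent to maximizing ω. -/
/-!
Each summand of the total information splits, by the rules of `logb`, into the surprisal of the
baseline, minus the prediction gain, plus the inference term `logb (Qθ / p)`, plus the description
length `L`, minus the surprisal of `Qψ`. Summing against the weights `Qψ ψ * Qθ ψ θ`, every term
depending on `ψ` alone is marginalised over `θ`, which leaves exactly `ω`.
-/

open Finset Real

theorem sum_sum_mul_mul_eq_sum_mul {ι κ R : Type*} [Fintype ι] [Fintype κ] [CommSemiring R]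
    (w : ι → R) (Q : ι → κ → R) (hQ : ∀ i, ∑ k, Q i k = 1) (g : ι → R) :
    ∑ i, ∑ k, w i * Q i k * g i = ∑ i, w i * g i := by
  refine sum_congr rfl fun i _ => ?_
  rw [← sum_mul, ← mul_sum, hQ, mul_one]

theorem Real.logb_mul_div_mul_mul_rpow_neg {β a b c d c₀ : ℝ} (l : ℝ) (hβ : 0 < β) (hβ₁ : β ≠ 1)
    (ha : a ≠ 0) (hb : b ≠ 0) (hc : c ≠ 0) (hd : d ≠ 0) (hc₀ : c₀ ≠ 0) :
    logb β (a * b / (c * d * β ^ (-l)))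
      = logb β (1 / c₀) - logb β (c / c₀) + logb β (a / d) + l - logb β (1 / b) := by
  have hpow : β ^ (-l) ≠ 0 := (rpow_pos_of_pos hβ _).ne'
  rw [logb_div (mul_ne_zero ha hb) (mul_ne_zero (mul_ne_zero hc hd) hpow), logb_mul ha hb,
    logb_mul (mul_ne_zero hc hd) hpow, logb_mul hc hd, logb_rpow hβ hβ₁, logb_div hc hc₀,
    logb_div ha hd, one_div, logb_inv, one_div, logb_inv]
  ring

theorem Real.mul_mul_logb_mul_div_mul_mul_rpow_neg {β c d c₀ : ℝ} (a b l : ℝ) (hβ : 0 < β)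
    (hβ₁ : β ≠ 1) (hc : c ≠ 0) (hd : d ≠ 0) (hc₀ : c₀ ≠ 0) :
    b * a * logb β (a * b / (c * d * β ^ (-l)))
      = b * a * (logb β (1 / c₀) - logb β (c / c₀) + logb β (a / d) + l - logb β (1 / b)) := by
  rcases eq_or_ne a 0 with rfl | ha
  · simp
  rcases eq_or_ne b 0 with rfl | hb
  · simp
  rw [logb_mul_div_mul_mul_rpow_neg l hβ hβ₁ ha hb hc hd hc₀]

theorem parsimonious_inference_optimization_general
    {Y Θ Ψ : Type*} [Fintype Θ] [Fintype Ψ]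
    (yObs : Y) (PY : Θ → Y → ℝ)
    (hPYpos : ∀ θ y, 0 < PY θ y)
    (p : Ψ → Θ → ℝ)
    (hppos : ∀ ψ θ, 0 < p ψ θ)
    (L : Ψ → ℝ)
    (θ0 : Θ)
    (Qθ : Ψ → Θ → ℝ)
    (hQθ1 : ∀ ψ, ∑ θ, Qθ ψ θ = 1)
    (Qψ : Ψ → ℝ)
    (hQψ1 : ∑ ψ, Qψ ψ = 1) :
    ∑ ψ, ∑ θ, Qψ ψ * Qθ ψ θ *
        Real.logb 2 ((Qθ ψ θ * Qψ ψ) / (PY θ yObs * p ψ θ * (2 : ℝ) ^ (-(L ψ))))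
      = Real.logb 2 (1 / PY θ0 yObs) -
        ((∑ ψ, ∑ θ, Qψ ψ * Qθ ψ θ * Real.logb 2 (PY θ yObs / PY θ0 yObs))
          - (∑ ψ, Qψ ψ * ∑ θ, Qθ ψ θ * Real.logb 2 (Qθ ψ θ / p ψ θ))
          - (∑ ψ, Qψ ψ * L ψ)
          + (∑ ψ, Qψ ψ * Real.logb 2 (1 / Qψ ψ))) := by
  have hmarg := sum_sum_mul_mul_eq_sum_mul Qψ Qθ hQθ1
  have hconst : ∀ c : ℝ, ∑ ψ, ∑ θ, Qψ ψ * Qθ ψ θ * c = c := fun c => by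
    rw [hmarg fun _ => c, ← sum_mul, hQψ1, one_mul]
  calc _ = ∑ ψ, ∑ θ, (Qψ ψ * Qθ ψ θ * logb 2 (1 / PY θ0 yObs)
          - Qψ ψ * Qθ ψ θ * logb 2 (PY θ yObs / PY θ0 yObs)
          + Qψ ψ * (Qθ ψ θ * logb 2 (Qθ ψ θ / p ψ θ))
          + Qψ ψ * Qθ ψ θ * L ψ - Qψ ψ * Qθ ψ θ * logb 2 (1 / Qψ ψ)) := by
        refine sum_congr rfl fun ψ _ => sum_congr rfl fun θ _ => ?_
        rw [mul_mul_logb_mul_div_mul_mul_rpow_neg _ _ _ two_pos (by norm_num) (hPYpos θ yObs).ne'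
          (hppos ψ θ).ne' (hPYpos θ0 yObs).ne']
        ring
    _ = _ := by
        simp only [sum_add_distrib, sum_sub_distrib, ← mul_sum, hconst, hmarg L,
          hmarg fun ψ => logb 2 (1 / Qψ ψ)]
        ring

/-- **Parsimonious Inference Optimization.** The total information gained by
changing belief from the joint prior `PY · p · h` (with parsimonious
hyperprior `h ψ = 2^(-L ψ)`) to `δ_yObs ⊗ Qθ ⊗ Qψ` equals
`logb 2 (1 / PY θ0 yObs) − ω[Qθ, Qψ]`, where `ω` is the parsimony objective
(prediction information minus inference information minus description
information). Hence minimizing the total information is equivalent to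
maximizing `ω`. -/
theorem parsimonious_inference_optimization
    {Y Θ Ψ : Type*} [Fintype Y] [Fintype Θ] [Fintype Ψ]
    (yObs : Y) (PY : Θ → Y → ℝ)
    (hPYpos : ∀ θ y, 0 < PY θ y) (hPY1 : ∀ θ, ∑ y, PY θ y = 1)
    (p : Ψ → Θ → ℝ)
    (hppos : ∀ ψ θ, 0 < p ψ θ) (hp1 : ∀ ψ, ∑ θ, p ψ θ = 1)
    (L : Ψ → ℝ) (hL1 : ∑ ψ, (2 : ℝ) ^ (-(L ψ)) = 1)
    (θ0 : Θ)
    (Qθ : Ψ → Θ → ℝ)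
    (hQθ0 : ∀ ψ θ, 0 ≤ Qθ ψ θ) (hQθ1 : ∀ ψ, ∑ θ, Qθ ψ θ = 1)
    (Qψ : Ψ → ℝ)
    (hQψ0 : ∀ ψ, 0 ≤ Qψ ψ) (hQψ1 : ∑ ψ, Qψ ψ = 1) :
    ∑ ψ, ∑ θ, Qψ ψ * Qθ ψ θ *
        Real.logb 2 ((Qθ ψ θ * Qψ ψ) / (PY θ yObs * p ψ θ * (2 : ℝ) ^ (-(L ψ))))
      = Real.logb 2 (1 / PY θ0 yObs) -
        ((∑ ψ, ∑ θ, Qψ ψ * Qθ ψ θ * Real.logb 2 (PY θ yObs / PY θ0 yObs))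
          - (∑ ψ, Qψ ψ * ∑ θ, Qθ ψ θ * Real.logb 2 (Qθ ψ θ / p ψ θ))
          - (∑ ψ, Qψ ψ * L ψ)
          + (∑ ψ, Qψ ψ * Real.logb 2 (1 / Qψ ψ))) :=
  parsimonious_inference_optimization_general yObs PY hPYpos p hppos L θ0 Qθ hQθ1 Qψ hQψ1
end

section
/- Let Y, Θ, Ψ be finite types, ŷ ∈ Y the observed label, PY : Θ → Y → ℝ strictly positive likelihoods with each PY θ a probability mass function on Y, p : Ψ → Θ → ℝ strictly positive priors with each p ψ a probability mass function on Θ, h a strictly positive probability mass function on Ψ (the hyperprior), θ0 ∈ Θ a baseline, and ℓ0 := PY θ0 ŷ. For each ψ define the model-class evidence Z ψ := ∑_θ p ψ θ * PY θ ŷ and the posterior π* ψ θ := p ψ θ * PY θ ŷ / Z ψ. Then: (i) substituting Qθ ψ = π* ψ into the parsimony objective ω[Qθ, Qψ] = ∑_{ψ,θ} Qψ ψ Qθ ψ θ Real.logb 2 (PY θ ŷ / ℓ0) − ∑_ψ Qψ ψ KL(Qθ ψ ‖ p ψ) − KL(Qψ‖h) yields ω[π*, Qψ] = ∑_ψ Qψ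 ψ * Real.logb 2 (Z ψ / ℓ0) − KL(Qψ‖h) for every probability mass function Qψ on Ψ; and (ii) this equals Real.logb 2 ((∑_ψ h ψ * Z ψ) / ℓ0) − KL(Qψ ‖ h*) where h* ψ := h ψ * Z ψ / ∑_{ψ'} h ψ' * Z ψ' is the hyperposterior, so the unique maximizer over Qψ is the hyperposterior Qψ = h*. -/
/-!
For any weights `q` of total mass one, a prior `r` and a likelihood `L`,
`∑ q log (L / c) − KL(q‖r) = log ((∑ r L) / c) − KL(q‖r L / ∑ r L)`:
the expected log-likelihood minus the information cost equals the log-evidence minus the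
divergence from the Bayes posterior. Inside each model class, taking `q` to be that posterior
kills the last term and gives (i); at the hyper level, with the class evidence `Z` as the
likelihood, the same identity is (ii). Gibbs' inequality, via `KL(q‖r) = ∑ r · klFun (q / r)`
for `q`, `r` of equal mass, makes the hyperposterior the unique maximizer.
-/

open Finset Real InformationTheory

section

variable {α : Type*} [Fintype α] {b c : ℝ} {q r L : α → ℝ}

noncomputable def discreteKLDiv (b : ℝ) (q r : α → ℝ) : ℝ :=
  ∑ x, q x * logb b (q x / r x)

noncomputable def posterior (r L : α → ℝ) (x : α) : ℝ :=
  r x * L x / ∑ y, r y * L y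

theorem sum_posterior (hS : ∑ x, r x * L x ≠ 0) : ∑ x, posterior r L x = 1 := by
  rw [← div_self hS, sum_div]
  rfl

theorem posterior_pos [Nonempty α] (hr : ∀ x, 0 < r x) (hL : ∀ x, 0 < L x) (x : α) :
    0 < posterior r L x :=
  div_pos (mul_pos (hr x) (hL x)) (sum_pos (fun y _ => mul_pos (hr y) (hL y)) univ_nonempty)

theorem discreteKLDiv_self (b : ℝ) (q : α → ℝ) : discreteKLDiv b q q = 0 := by
  refine sum_eq_zero fun x _ => ?_
  by_cases hx : q x = 0 <;> simp [hx]

theorem discreteKLDiv_eq_sum_mul_klFun (hr : ∀ x, r x ≠ 0) (hqr : ∑ x, q x = ∑ x, r x) :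
    discreteKLDiv b q r = (∑ x, r x * klFun (q x / r x)) / log b := by
  have hterm : ∀ x, r x * klFun (q x / r x) = q x * log (q x / r x) + r x - q x := by
    intro x
    rw [klFun_apply]
    field_simp [hr x]
  simp only [hterm, sum_sub_distrib, sum_add_distrib, hqr, add_sub_cancel_right, sum_div,
    discreteKLDiv, logb, mul_div_assoc]

theorem discreteKLDiv_nonneg (hb : 1 < b) (hq : ∀ x, 0 ≤ q x) (hr : ∀ x, 0 < r x)
    (hqr : ∑ x, q x = ∑ x, r x) : 0 ≤ discreteKLDiv b q r := by
  rw [discreteKLDiv_eq_sum_mul_klFun (fun x => (hr x).ne') hqr]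
  exact div_nonneg (sum_nonneg fun x _ =>
    mul_nonneg (hr x).le (klFun_nonneg (div_nonneg (hq x) (hr x).le))) (log_nonneg hb.le)

theorem discreteKLDiv_eq_zero_iff (hb : 1 < b) (hq : ∀ x, 0 ≤ q x) (hr : ∀ x, 0 < r x)
    (hqr : ∑ x, q x = ∑ x, r x) : discreteKLDiv b q r = 0 ↔ q = r := by
  have hterm_nonneg : ∀ x ∈ univ, 0 ≤ r x * klFun (q x / r x) := fun x _ =>
    mul_nonneg (hr x).le (klFun_nonneg (div_nonneg (hq x) (hr x).le))
  rw [discreteKLDiv_eq_sum_mul_klFun (fun x => (hr x).ne') hqr, div_eq_zero_iff,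
    or_iff_left (log_pos hb).ne', sum_eq_zero_iff_of_nonneg hterm_nonneg, funext_iff]
  refine forall_congr' fun x => ?_
  rw [mul_eq_zero, or_iff_right (hr x).ne', klFun_eq_zero_iff (div_nonneg (hq x) (hr x).le),
    div_eq_one_iff_eq (hr x).ne', imp_iff_right (mem_univ x)]

theorem sum_mul_logb_sub_discreteKLDiv_eq (hr : ∀ x, r x ≠ 0) (hL : ∀ x, L x ≠ 0)
    (hS : ∑ x, r x * L x ≠ 0) (hc : c ≠ 0) (hq : ∑ x, q x = 1) :
    ∑ x, q x * logb b (L x / c) - discreteKLDiv b q r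
      = logb b ((∑ x, r x * L x) / c) - discreteKLDiv b q (posterior r L) := by
  have hterm : ∀ x, q x * logb b (L x / c) - q x * logb b (q x / r x)
      = q x * logb b ((∑ x, r x * L x) / c) - q x * logb b (q x / posterior r L x) := by
    intro x
    by_cases hqx : q x = 0
    · simp [hqx]
    · simp only [posterior, logb]
      rw [log_div (hL x) hc, log_div hqx (hr x), log_div hS hc,
        log_div hqx (div_ne_zero (mul_ne_zero (hr x) (hL x)) hS),
        log_div (mul_ne_zero (hr x) (hL x)) hS, log_mul (hr x) (hL x)]
      ring
  rw [discreteKLDiv, discreteKLDiv, ← sum_sub_distrib, sum_congr rfl fun x _ => hterm x,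
    sum_sub_distrib, ← sum_mul, hq, one_mul]

theorem sum_posterior_mul_logb_sub_discreteKLDiv (hr : ∀ x, r x ≠ 0) (hL : ∀ x, L x ≠ 0)
    (hS : ∑ x, r x * L x ≠ 0) (hc : c ≠ 0) :
    ∑ x, posterior r L x * logb b (L x / c) - discreteKLDiv b (posterior r L) r
      = logb b ((∑ x, r x * L x) / c) := by
  rw [sum_mul_logb_sub_discreteKLDiv_eq hr hL hS hc (sum_posterior hS), discreteKLDiv_self,
    sub_zero]

end

theorem optimality_of_hyper_inference_general
    {Y Θ Ψ : Type*} [Fintype Θ] [Fintype Ψ]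
    (yObs : Y) (PY : Θ → Y → ℝ)
    (hPYpos : ∀ θ y, 0 < PY θ y)
    (p : Ψ → Θ → ℝ)
    (hppos : ∀ ψ θ, 0 < p ψ θ)
    (h : Ψ → ℝ) (hhpos : ∀ ψ, 0 < h ψ)
    (θ0 : Θ) (l0 : ℝ) (hl0 : l0 = PY θ0 yObs)
    (Z : Ψ → ℝ) (hZ : ∀ ψ, Z ψ = ∑ θ, p ψ θ * PY θ yObs)
    (post : Ψ → Θ → ℝ) (hpost : ∀ ψ θ, post ψ θ = p ψ θ * PY θ yObs / Z ψ)
    (hstar : Ψ → ℝ)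
    (hhstar : ∀ ψ, hstar ψ = h ψ * Z ψ / ∑ ψ', h ψ' * Z ψ')
    (Qψ : Ψ → ℝ) (hQψ0 : ∀ ψ, 0 ≤ Qψ ψ) (hQψ1 : ∑ ψ, Qψ ψ = 1) :
    ((∑ ψ, ∑ θ, Qψ ψ * post ψ θ * Real.logb 2 (PY θ yObs / l0))
        - (∑ ψ, Qψ ψ * ∑ θ, post ψ θ * Real.logb 2 (post ψ θ / p ψ θ))
        - (∑ ψ, Qψ ψ * Real.logb 2 (Qψ ψ / h ψ))
      = (∑ ψ, Qψ ψ * Real.logb 2 (Z ψ / l0))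
          - (∑ ψ, Qψ ψ * Real.logb 2 (Qψ ψ / h ψ))) ∧
    ((∑ ψ, Qψ ψ * Real.logb 2 (Z ψ / l0))
        - (∑ ψ, Qψ ψ * Real.logb 2 (Qψ ψ / h ψ))
      = Real.logb 2 ((∑ ψ, h ψ * Z ψ) / l0)
          - ∑ ψ, Qψ ψ * Real.logb 2 (Qψ ψ / hstar ψ)) ∧
    ((∑ ψ, Qψ ψ * Real.logb 2 (Z ψ / l0))
        - (∑ ψ, Qψ ψ * Real.logb 2 (Qψ ψ / h ψ))
      ≤ Real.logb 2 ((∑ ψ, h ψ * Z ψ) / l0)) ∧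
    ((∑ ψ, Qψ ψ * Real.logb 2 (Z ψ / l0))
        - (∑ ψ, Qψ ψ * Real.logb 2 (Qψ ψ / h ψ))
      = Real.logb 2 ((∑ ψ, h ψ * Z ψ) / l0) ↔ Qψ = hstar) := by
  have : Nonempty Θ := ⟨θ0⟩
  have : Nonempty Ψ := by
    by_contra hΨ
    simp [not_nonempty_iff.mp hΨ] at hQψ1
  have hl0 : l0 ≠ 0 := hl0 ▸ (hPYpos θ0 yObs).ne'
  have hZ_pos ψ : 0 < Z ψ :=
    hZ ψ ▸ sum_pos (fun θ _ => mul_pos (hppos ψ θ) (hPYpos θ yObs)) univ_nonempty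
  have hclass ψ : ∑ θ, post ψ θ * logb 2 (PY θ yObs / l0)
      - ∑ θ, post ψ θ * logb 2 (post ψ θ / p ψ θ) = logb 2 (Z ψ / l0) := by
    have hpost_eq : post ψ = posterior (p ψ) (PY · yObs) :=
      funext fun θ => by rw [hpost, hZ]; rfl
    rw [hpost_eq, hZ ψ]
    exact sum_posterior_mul_logb_sub_discreteKLDiv (fun θ => (hppos ψ θ).ne')
      (fun θ => (hPYpos θ yObs).ne') (hZ ψ ▸ (hZ_pos ψ).ne') hl0
  have hobjective : ∑ ψ, ∑ θ, Qψ ψ * post ψ θ * logb 2 (PY θ yObs / l0)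
      - ∑ ψ, Qψ ψ * ∑ θ, post ψ θ * logb 2 (post ψ θ / p ψ θ)
      = ∑ ψ, Qψ ψ * logb 2 (Z ψ / l0) := by
    simp only [mul_assoc, ← mul_sum, ← sum_sub_distrib, ← mul_sub, hclass]
  obtain rfl : hstar = posterior h Z := funext hhstar
  have hS : ∑ ψ, h ψ * Z ψ ≠ 0 :=
    (sum_pos (fun ψ _ => mul_pos (hhpos ψ) (hZ_pos ψ)) univ_nonempty).ne'
  have hhyper := sum_mul_logb_sub_discreteKLDiv_eq (b := 2) (fun ψ => (hhpos ψ).ne')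
    (fun ψ => (hZ_pos ψ).ne') hS hl0 hQψ1
  have hmass : ∑ ψ, Qψ ψ = ∑ ψ, posterior h Z ψ := hQψ1.trans (sum_posterior hS).symm
  have hhstar_pos := posterior_pos hhpos hZ_pos
  have hgap_nonneg := discreteKLDiv_nonneg one_lt_two hQψ0 hhstar_pos hmass
  have hgap_zero := discreteKLDiv_eq_zero_iff one_lt_two hQψ0 hhstar_pos hmass
  unfold discreteKLDiv at hhyper hgap_nonneg hgap_zero
  refine ⟨by rw [hobjective], hhyper, by linarith, ?_⟩
  rw [hhyper, sub_eq_self, hgap_zero]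

/-- **Optimality of Hyper Inference.** Substituting the exact per-class
posterior `π* ψ` into the parsimony objective yields
`ω[π*, Qψ] = ∑ ψ, Qψ ψ * logb 2 (Z ψ / ℓ0) − KL(Qψ‖h)`, which further equals
`logb 2 ((∑ ψ, h ψ * Z ψ)/ℓ0) − KL(Qψ‖h*)` for the hyperposterior `h*`, so
the unique maximizer over `Qψ` is the hyperposterior. -/
theorem optimality_of_hyper_inference
    {Y Θ Ψ : Type*} [Fintype Y] [Fintype Θ] [Fintype Ψ]
    (yObs : Y) (PY : Θ → Y → ℝ)
    (hPYpos : ∀ θ y, 0 < PY θ y) (hPY1 : ∀ θ, ∑ y, PY θ y = 1)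
    (p : Ψ → Θ → ℝ)
    (hppos : ∀ ψ θ, 0 < p ψ θ) (hp1 : ∀ ψ, ∑ θ, p ψ θ = 1)
    (h : Ψ → ℝ) (hhpos : ∀ ψ, 0 < h ψ) (hh1 : ∑ ψ, h ψ = 1)
    (θ0 : Θ) (l0 : ℝ) (hl0 : l0 = PY θ0 yObs)
    (Z : Ψ → ℝ) (hZ : ∀ ψ, Z ψ = ∑ θ, p ψ θ * PY θ yObs)
    (post : Ψ → Θ → ℝ) (hpost : ∀ ψ θ, post ψ θ = p ψ θ * PY θ yObs / Z ψ)
    (hstar : Ψ → ℝ)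
    (hhstar : ∀ ψ, hstar ψ = h ψ * Z ψ / ∑ ψ', h ψ' * Z ψ')
    (Qψ : Ψ → ℝ) (hQψ0 : ∀ ψ, 0 ≤ Qψ ψ) (hQψ1 : ∑ ψ, Qψ ψ = 1) :
    ((∑ ψ, ∑ θ, Qψ ψ * post ψ θ * Real.logb 2 (PY θ yObs / l0))
        - (∑ ψ, Qψ ψ * ∑ θ, post ψ θ * Real.logb 2 (post ψ θ / p ψ θ))
        - (∑ ψ, Qψ ψ * Real.logb 2 (Qψ ψ / h ψ))
      = (∑ ψ, Qψ ψ * Real.logb 2 (Z ψ / l0))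
          - (∑ ψ, Qψ ψ * Real.logb 2 (Qψ ψ / h ψ))) ∧
    ((∑ ψ, Qψ ψ * Real.logb 2 (Z ψ / l0))
        - (∑ ψ, Qψ ψ * Real.logb 2 (Qψ ψ / h ψ))
      = Real.logb 2 ((∑ ψ, h ψ * Z ψ) / l0)
          - ∑ ψ, Qψ ψ * Real.logb 2 (Qψ ψ / hstar ψ)) ∧
    ((∑ ψ, Qψ ψ * Real.logb 2 (Z ψ / l0))
        - (∑ ψ, Qψ ψ * Real.logb 2 (Qψ ψ / h ψ))
      ≤ Real.logb 2 ((∑ ψ, h ψ * Z ψ) / l0)) ∧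
    ((∑ ψ, Qψ ψ * Real.logb 2 (Z ψ / l0))
        - (∑ ψ, Qψ ψ * Real.logb 2 (Qψ ψ / h ψ))
      = Real.logb 2 ((∑ ψ, h ψ * Z ψ) / l0) ↔ Qψ = hstar) :=
  optimality_of_hyper_inference_general yObs PY hPYpos p hppos h hhpos θ0 l0 hl0 Z hZ post hpost
    hstar hhstar Qψ hQψ0 hQψ1
end

section
/- Let Θ and Ψ be finite types, ℓ : Θ → ℝ strictly positive (the likelihood θ ↦ P(ŷ|θ) of the observed labels), ℓ0 > 0 a baseline, and Pj a strictly positive probability mass function on Θ × Ψ (the joint prior P(θ, ψ)). For a probability mass function Q on Θ × Ψ define the model complexity χ[Q] := KL(Q‖Pj) and the objective ω[Q] := ∑_{(θ,ψ)} Q (θ,ψ) * Real.logb 2 (ℓ θ / ℓ0) − χ[Q]. Let F be any set of probability mass functions on Θ × Ψ and let Q* ∈ F maximize ω over F. Define the optimal predictive likelihood of the observed labels Q*Y := ∑_{(θ,ψ)} Q* (θ,ψ) * ℓ θ. Then every Q ∈ F satisfies χ[Q] − χ[Q*] ≥ ∑_{(θ,ψ)} Q (θ,ψ) * Real.logb 2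 (ℓ θ / Q*Y): any increase in agreement with the training data over the optimal aggregate predictions can only be achieved by a still greater increase in model complexity. -/
/-! Subtracting the baseline `l0` shifts `ω` by the constant `logb 2 l0` on probability vectors,
so maximality of `Q*` says `χ[Q] - χ[Q*] ≥ 𝔼_Q[logb 2 ℓ] - 𝔼_{Q*}[logb 2 ℓ]`. By Jensen's
inequality for the concave logarithm, `𝔼_{Q*}[logb 2 ℓ] ≤ logb 2 Q*Y`, and
`𝔼_Q[logb 2 ℓ] - logb 2 Q*Y = 𝔼_Q[logb 2 (ℓ / Q*Y)]`. -/

open Finset Real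

section WeightedLogb

variable {ι : Type*} (s : Finset ι) {w f : ι → ℝ}

theorem sum_mul_logb_div_of_sum_eq_one {b c : ℝ} (hw : ∑ i ∈ s, w i = 1)
    (hf : ∀ i ∈ s, f i ≠ 0) (hc : c ≠ 0) :
    ∑ i ∈ s, w i * logb b (f i / c) = ∑ i ∈ s, w i * logb b (f i) - logb b c := by
  calc ∑ i ∈ s, w i * logb b (f i / c)
      = ∑ i ∈ s, (w i * logb b (f i) - w i * logb b c) :=
        sum_congr rfl fun i hi => by rw [logb_div (hf i hi) hc, mul_sub]
    _ = ∑ i ∈ s, w i * logb b (f i) - logb b c := by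
        rw [sum_sub_distrib, ← sum_mul, hw, one_mul]

theorem sum_mul_pos_of_sum_eq_one (hw0 : ∀ i ∈ s, 0 ≤ w i) (hw1 : ∑ i ∈ s, w i = 1)
    (hf : ∀ i ∈ s, 0 < f i) : 0 < ∑ i ∈ s, w i * f i :=
  (convex_Ioi (0 : ℝ)).sum_mem hw0 hw1 hf

theorem sum_mul_logb_le_logb_sum_mul {b : ℝ} (hb : 1 ≤ b) (hw0 : ∀ i ∈ s, 0 ≤ w i)
    (hw1 : ∑ i ∈ s, w i = 1) (hf : ∀ i ∈ s, 0 < f i) :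
    ∑ i ∈ s, w i * logb b (f i) ≤ logb b (∑ i ∈ s, w i * f i) := by
  have jensen : ∑ i ∈ s, w i * log (f i) ≤ log (∑ i ∈ s, w i * f i) :=
    strictConcaveOn_log_Ioi.concaveOn.le_map_sum hw0 hw1 hf
  simp only [logb, mul_div_assoc', ← sum_div]
  exact div_le_div_of_nonneg_right jensen (log_nonneg hb)

end WeightedLogb

theorem quantifying_memorization_general {Θ Ψ : Type*} [Fintype Θ] [Fintype Ψ]
    (l : Θ → ℝ) (hlpos : ∀ θ, 0 < l θ)
    (l0 : ℝ) (hl0 : 0 < l0)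
    (Pj : Θ × Ψ → ℝ)
    (F : Set (Θ × Ψ → ℝ))
    (hF : ∀ Q ∈ F, (∀ x, 0 ≤ Q x) ∧ ∑ x, Q x = 1)
    (Qstar : Θ × Ψ → ℝ) (hQstarF : Qstar ∈ F)
    (hmax : ∀ Q ∈ F,
      (∑ x, Q x * Real.logb 2 (l x.1 / l0))
          - (∑ x, Q x * Real.logb 2 (Q x / Pj x))
        ≤ (∑ x, Qstar x * Real.logb 2 (l x.1 / l0))
          - (∑ x, Qstar x * Real.logb 2 (Qstar x / Pj x)))
    (QstarY : ℝ) (hQstarY : QstarY = ∑ x, Qstar x * l x.1) :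
    ∀ Q ∈ F,
      (∑ x, Q x * Real.logb 2 (l x.1 / QstarY))
        ≤ (∑ x, Q x * Real.logb 2 (Q x / Pj x))
          - (∑ x, Qstar x * Real.logb 2 (Qstar x / Pj x)) := by
  intro Q hQ
  obtain ⟨-, hQ1⟩ := hF Q hQ
  obtain ⟨hQstar0, hQstar1⟩ := hF Qstar hQstarF
  have hl : ∀ x ∈ (univ : Finset (Θ × Ψ)), 0 < l x.1 := fun x _ => hlpos x.1
  have hl_ne : ∀ x ∈ (univ : Finset (Θ × Ψ)), l x.1 ≠ 0 := fun x hx => (hl x hx).ne'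
  have hY : 0 < QstarY :=
    hQstarY ▸ sum_mul_pos_of_sum_eq_one _ (fun x _ => hQstar0 x) hQstar1 hl
  have jensen : ∑ x, Qstar x * logb 2 (l x.1) ≤ logb 2 QstarY :=
    hQstarY ▸ sum_mul_logb_le_logb_sum_mul _ one_le_two (fun x _ => hQstar0 x) hQstar1 hl
  have gain := hmax Q hQ
  rw [sum_mul_logb_div_of_sum_eq_one _ hQ1 hl_ne hl0.ne',
    sum_mul_logb_div_of_sum_eq_one _ hQstar1 hl_ne hl0.ne'] at gain
  rw [sum_mul_logb_div_of_sum_eq_one _ hQ1 hl_ne hY.ne']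
  linarith

/-- **Quantifying Memorization.** Let `Q*` maximize the parsimony objective
`ω[Q] = ∑ (θ,ψ), Q (θ,ψ) * logb 2 (ℓ θ / ℓ0) − χ[Q]`, with model complexity
`χ[Q] = KL(Q‖Pj)`, over a feasible set `F` of probability mass functions on
`Θ × Ψ`. Then any feasible `Q` satisfies
`χ[Q] − χ[Q*] ≥ ∑ (θ,ψ), Q (θ,ψ) * logb 2 (ℓ θ / Q*Y)`, where
`Q*Y = ∑ (θ,ψ), Q* (θ,ψ) * ℓ θ` is the optimal predictive likelihood: any
increased agreement with training data costs a still greater increase in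
model complexity. -/
theorem quantifying_memorization {Θ Ψ : Type*} [Fintype Θ] [Fintype Ψ]
    (l : Θ → ℝ) (hlpos : ∀ θ, 0 < l θ)
    (l0 : ℝ) (hl0 : 0 < l0)
    (Pj : Θ × Ψ → ℝ) (hPjpos : ∀ x, 0 < Pj x) (hPj1 : ∑ x, Pj x = 1)
    (F : Set (Θ × Ψ → ℝ))
    (hF : ∀ Q ∈ F, (∀ x, 0 ≤ Q x) ∧ ∑ x, Q x = 1)
    (Qstar : Θ × Ψ → ℝ) (hQstarF : Qstar ∈ F)
    (hmax : ∀ Q ∈ F,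
      (∑ x, Q x * Real.logb 2 (l x.1 / l0))
          - (∑ x, Q x * Real.logb 2 (Q x / Pj x))
        ≤ (∑ x, Qstar x * Real.logb 2 (l x.1 / l0))
          - (∑ x, Qstar x * Real.logb 2 (Qstar x / Pj x)))
    (QstarY : ℝ) (hQstarY : QstarY = ∑ x, Qstar x * l x.1) :
    ∀ Q ∈ F,
      (∑ x, Q x * Real.logb 2 (l x.1 / QstarY))
        ≤ (∑ x, Q x * Real.logb 2 (Q x / Pj x))
          - (∑ x, Qstar x * Real.logb 2 (Qstar x / Pj x)) :=
  quantifying_memorization_general l hlpos l0 hl0 Pj F hF Qstar hQstarF hmax QstarY hQstarY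
end

section
/- Let Z be a finite type, let R and Q1 be probability mass functions on Z with Q1 strictly positive and R ≠ Q1, let Q0 be a strictly positive probability mass function on Z, and let η : Z → ℝ satisfy: ∑_z η z = 0 (normalization is preserved), η z * (R z − Q1 z) ≥ 0 for all z (the perturbation drives belief toward R), and η z * (R z − Q1 z) > 0 for some z. Then: (i) the function ε ↦ ∑_z R z * Real.logb 2 ((Q1 z + ε * η z) / Q0 z) has derivative at ε = 0 equal to (1 / Real.log 2) * ∑_z R z * η z / Q1 z; and (ii) this derivative is strictly positive. -/
/-!
Each summand `R z * logb 2 ((Q1 z + ε η z) / Q0 z)` has derivative `R z η z / (Q1 z log 2)` at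
`ε = 0`. Since `∑ η = 0`, subtracting `∑ z, Q1 z * η z / Q1 z` does not change the sum, which
becomes `∑ η z (R z - Q1 z) / Q1 z`: a sum of nonnegative terms, one of them positive.
-/

open Real Finset

theorem hasDerivAt_logb_add_mul_div {a b c B : ℝ} (ha : a ≠ 0) (hb : b ≠ 0) :
    HasDerivAt (fun ε : ℝ => logb B ((a + ε * c) / b)) (c / a / log B) 0 := by
  have hlin : HasDerivAt (fun ε : ℝ => (a + ε * c) / b) (c / b) 0 :=
    ((hasDerivAt_mul_const c).const_add a).div_const b
  refine ((hlin.log (by simpa using div_ne_zero ha hb)).div_const (log B)).congr_deriv ?_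
  rw [zero_mul, add_zero]
  field_simp

section Finite

variable {ι : Type*} [Fintype ι]

theorem hasDerivAt_sum_mul_logb_add_mul_div (r q₁ q₀ η : ι → ℝ) (B : ℝ)
    (hq₁ : ∀ z, q₁ z ≠ 0) (hq₀ : ∀ z, q₀ z ≠ 0) :
    HasDerivAt (fun ε : ℝ => ∑ z, r z * logb B ((q₁ z + ε * η z) / q₀ z))
      ((1 / log B) * ∑ z, r z * η z / q₁ z) 0 := by
  refine (HasDerivAt.fun_sum fun z _ =>
    (hasDerivAt_logb_add_mul_div (c := η z) (B := B) (hq₁ z) (hq₀ z)).const_mul (r z)).congr_deriv ?_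
  rw [mul_sum]
  exact sum_congr rfl fun z _ => by ring

theorem sum_mul_div_eq_sum_mul_sub_div {r q η : ι → ℝ} (hq : ∀ z, q z ≠ 0) (hη : ∑ z, η z = 0) :
    ∑ z, r z * η z / q z = ∑ z, η z * (r z - q z) / q z := by
  have hterm : ∀ z, η z * (r z - q z) / q z = r z * η z / q z - η z := fun z => by
    field_simp [hq z]
  simp only [hterm, sum_sub_distrib, hη, sub_zero]

theorem sum_mul_div_pos_of_toward {r q η : ι → ℝ} (hq : ∀ z, 0 < q z) (hη : ∑ z, η z = 0)
    (htoward : ∀ z, 0 ≤ η z * (r z - q z)) (hstrict : ∃ z, 0 < η z * (r z - q z)) :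
    0 < ∑ z, r z * η z / q z := by
  rw [sum_mul_div_eq_sum_mul_sub_div (fun z => (hq z).ne') hη]
  obtain ⟨z₀, hz₀⟩ := hstrict
  exact sum_pos' (fun z _ => div_nonneg (htoward z) (hq z).le)
    ⟨z₀, mem_univ _, div_pos hz₀ (hq z₀)⟩

end Finite

theorem proper_perturbation_response_general {Z : Type*} [Fintype Z]
    (R Q1 Q0 : Z → ℝ)
    (hQ1pos : ∀ z, 0 < Q1 z)
    (hQ0pos : ∀ z, 0 < Q0 z)
    (η : Z → ℝ) (hη0 : ∑ z, η z = 0)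
    (htoward : ∀ z, 0 ≤ η z * (R z - Q1 z))
    (hstrict : ∃ z, 0 < η z * (R z - Q1 z)) :
    HasDerivAt (fun ε : ℝ => ∑ z, R z * Real.logb 2 ((Q1 z + ε * η z) / Q0 z))
        ((1 / Real.log 2) * ∑ z, R z * η z / Q1 z) 0 ∧
    0 < (1 / Real.log 2) * ∑ z, R z * η z / Q1 z :=
  ⟨hasDerivAt_sum_mul_logb_add_mul_div R Q1 Q0 η 2 (fun z => (hQ1pos z).ne') fun z => (hQ0pos z).ne',
    mul_pos (one_div_pos.mpr (log_pos one_lt_two))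
      (sum_mul_div_pos_of_toward hQ1pos hη0 htoward hstrict)⟩

/-- **Proper perturbation response.** If a normalization-preserving
perturbation `η` drives belief `Q1` toward the view `R` (with `R ≠ Q1`), then
the information `ε ↦ I(R; Q1 + ε η, Q0)` has derivative
`(1 / log 2) * ∑ z, R z * η z / Q1 z` at `ε = 0`, and this derivative is
strictly positive. -/
theorem proper_perturbation_response {Z : Type*} [Fintype Z]
    (R Q1 Q0 : Z → ℝ)
    (hR0 : ∀ z, 0 ≤ R z) (hR1 : ∑ z, R z = 1)
    (hQ1pos : ∀ z, 0 < Q1 z) (hQ11 : ∑ z, Q1 z = 1)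
    (hQ0pos : ∀ z, 0 < Q0 z) (hQ01 : ∑ z, Q0 z = 1)
    (hne : R ≠ Q1)
    (η : Z → ℝ) (hη0 : ∑ z, η z = 0)
    (htoward : ∀ z, 0 ≤ η z * (R z - Q1 z))
    (hstrict : ∃ z, 0 < η z * (R z - Q1 z)) :
    HasDerivAt (fun ε : ℝ => ∑ z, R z * Real.logb 2 ((Q1 z + ε * η z) / Q0 z))
        ((1 / Real.log 2) * ∑ z, R z * η z / Q1 z) 0 ∧
    0 < (1 / Real.log 2) * ∑ z, R z * η z / Q1 z :=
  proper_perturbation_response_general R Q1 Q0 hQ1pos hQ0pos η hη0 htoward hstrict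
end
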